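/- For all α, α′ ∈ k, the commutative k-algebras k[x,y,z]/(x^p, y^p − x, z^p − y − αx) and k[x,y,z]/(x^p, y^p − x, z^p − y − α′x) are isomorphic as k-algebras. -/
import Mathlib


noncomputable section

/-- The commutative algebra `H(α) = k[x,y,z]/(x^p, y^p − x, z^p − y − αx)`. -/
abbrev AlgHa (p : ℕ) (k : Type) [Field k] (α : k) :=
  MvPolynomial (Fin 3) k ⧸
    Ideal.span {(MvPolynomial.X 0 : MvPolynomial (Fin 3) k) ^ p,
      (MvPolynomial.X 1 : MvPolynomial (Fin 3) k) ^ p - MvPolynomial.X 0,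
      (MvPolynomial.X 2 : MvPolynomial (Fin 3) k) ^ p - MvPolynomial.X 1 -
        MvPolynomial.C α * MvPolynomial.X 0}

open MvPolynomial in
/-- The shift substitution `z ↦ z + βy`. -/
def shiftHom (k : Type) [Field k] (β : k) :
    MvPolynomial (Fin 3) k →ₐ[k] MvPolynomial (Fin 3) k :=
  aeval ![X 0, X 1, X 2 + C β * X 1]

open MvPolynomial in
lemma shift_comp (k : Type) [Field k] (β : k) :
    (shiftHom k β).comp (shiftHom k (-β)) = AlgHom.id k _ := by
  apply MvPolynomial.algHom_ext
  intro i
  fin_cases i <;> simp [shiftHom]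

open MvPolynomial in
/-- The shift substitution as an algebra equivalence. -/
def shiftEquiv (k : Type) [Field k] (β : k) :
    MvPolynomial (Fin 3) k ≃ₐ[k] MvPolynomial (Fin 3) k :=
  AlgEquiv.ofAlgHom (shiftHom k β) (shiftHom k (-β)) (shift_comp k β)
    (by simpa using shift_comp k (-β))

/-- For all `α, α′ ∈ k`, the commutative `k`-algebras `k[x,y,z]/(x^p, y^p − x, z^p − y − αx)`
and `k[x,y,z]/(x^p, y^p − x, z^p − y − α′x)` are isomorphic as `k`-algebras. -/
theorem H_alpha_iso (p : ℕ) (hp : p.Prime) (k : Type) [Field k] [IsAlgClosed k] [CharP k p]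
    (α α' : k) :
    Nonempty (AlgHa p k α ≃ₐ[k] AlgHa p k α') := by
  haveI : Fact p.Prime := ⟨hp⟩
  obtain ⟨β, hβ⟩ := IsAlgClosed.exists_pow_nat_eq (α - α') (n := p) hp.pos
  set R := MvPolynomial (Fin 3) k
  set g1 : R := MvPolynomial.X 0 ^ p
  set g2 : R := MvPolynomial.X 1 ^ p - MvPolynomial.X 0
  set g3 : k → R := fun a =>
    MvPolynomial.X 2 ^ p - MvPolynomial.X 1 - MvPolynomial.C a * MvPolynomial.X 0
  have e := shiftEquiv k β
  -- images of generators
  have h1 : shiftHom k β g1 = g1 := by simp [shiftHom, g1]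
  have h2 : shiftHom k β g2 = g2 := by simp [shiftHom, g2]
  have h3 : shiftHom k β (g3 α) = g3 α' + MvPolynomial.C (β ^ p) * g2 := by
    have key : (MvPolynomial.X 2 + MvPolynomial.C β * MvPolynomial.X 1 : R) ^ p
        = MvPolynomial.X 2 ^ p + MvPolynomial.C (β ^ p) * MvPolynomial.X 1 ^ p := by
      rw [add_pow_char, mul_pow, ← MvPolynomial.C_pow]
    simp only [shiftHom, g3, map_sub, map_mul, MvPolynomial.aeval_C, map_pow,
      MvPolynomial.aeval_X]
    rw [show (![MvPolynomial.X 0, MvPolynomial.X 1,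
        MvPolynomial.X 2 + MvPolynomial.C β * MvPolynomial.X 1] : Fin 3 → R) 2
        = MvPolynomial.X 2 + MvPolynomial.C β * MvPolynomial.X 1 from rfl,
      show (![MvPolynomial.X 0, MvPolynomial.X 1,
        MvPolynomial.X 2 + MvPolynomial.C β * MvPolynomial.X 1] : Fin 3 → R) 1
        = MvPolynomial.X 1 from rfl,
      show (![MvPolynomial.X 0, MvPolynomial.X 1,
        MvPolynomial.X 2 + MvPolynomial.C β * MvPolynomial.X 1] : Fin 3 → R) 0
        = MvPolynomial.X 0 from rfl, key, hβ, MvPolynomial.C_sub]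
    simp only [g2, MvPolynomial.algebraMap_eq, ← MvPolynomial.C_pow, hβ, MvPolynomial.C_sub]
    ring
  have hmap : Ideal.span {g1, g2, g3 α'}
      = (Ideal.span {g1, g2, g3 α}).map ((shiftEquiv k β : R →ₐ[k] R) : R →+* R) := by
    rw [Ideal.map_span]
    have himg : (((shiftEquiv k β : R →ₐ[k] R) : R →+* R) '' {g1, g2, g3 α})
        = {g1, g2, g3 α' + MvPolynomial.C (β ^ p) * g2} := by
      have : ∀ x : R, ((shiftEquiv k β : R →ₐ[k] R) : R →+* R) x = shiftHom k β x :=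
        fun x => rfl
      rw [Set.image_insert_eq, Set.image_insert_eq, Set.image_singleton,
        this, this, this, h1, h2, h3]
    rw [himg]
    apply le_antisymm <;> rw [Ideal.span_le] <;> rintro x (rfl | rfl | rfl)
    · exact Ideal.subset_span (by simp)
    · exact Ideal.subset_span (by simp)
    · have hm : g3 α' + MvPolynomial.C (β ^ p) * g2 ∈
          Ideal.span ({g1, g2, g3 α' + MvPolynomial.C (β ^ p) * g2} : Set R) :=
        Ideal.subset_span (by simp)
      have hg2 : g2 ∈ Ideal.span ({g1, g2, g3 α' + MvPolynomial.C (β ^ p) * g2} : Set R) :=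
        Ideal.subset_span (by simp)
      have := Ideal.sub_mem _ hm (Ideal.mul_mem_left _ (MvPolynomial.C (β ^ p)) hg2)
      simpa using this
    · exact Ideal.subset_span (by simp)
    · exact Ideal.subset_span (by simp)
    · exact Ideal.add_mem _ (Ideal.subset_span (by simp))
        (Ideal.mul_mem_left _ _ (Ideal.subset_span (by simp)))
  exact ⟨Ideal.quotientEquivAlg _ _ (shiftEquiv k β) hmap⟩
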